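/- In GL(2,D_τ), let U₁ = {I + f·E_{12} : f ∈ D[t]} (upper unitriangular matrices whose entry is a skew polynomial in t with coefficients in D, i.e. only nonnegative powers of t) and U₂ = {I + g·E_{21} : g ∈ D[t]·t} (lower unitriangular matrices whose entry is a skew polynomial with zero constant term). Then the subgroup U = ⟨U₁, U₂⟩ is the internal free product of U₁ and U₂: the canonical homomorphism from the free product U₁ ∗ U₂ to GL(2,D_τ) is injective. In particular, no nonempty alternating product e_{β₁}(q₁)⋯e_{β_r}(q_r) with β_i ∈ {±(ε₁−ε₂)}, β_i ≠ β_{i+1}, q_i ≠ 0 (q_i ∈ D[t] if β_i positive, q_i ∈ D[t]·t if β_i negative) equals the identity matrix. -/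

import Mathlib

namespace NCLaurent


/-- `A` is the ring `D_τ = D[t,t⁻¹]` of skew Laurent polynomials over the division
ring `D` twisted by `τ`: it contains `D` via `ι`, has a unit `t` with `t a t⁻¹ = τ a`,
and the powers of `t` form a basis of `A` as a left `D`-module. -/
structure IsSkewLaurent {D A : Type} [DivisionRing D] [Ring A]
    (τ : D ≃+* D) (ι : D →+* A) (t : Aˣ) : Prop where
  injective : Function.Injective ι
  conj_eq : ∀ a : D, (t : A) * ι a * ((t⁻¹ : Aˣ) : A) = ι (τ a)
  repr_unique : ∀ x : A, ∃! c : ℤ →₀ D, x = c.sum fun k a => ι a * ((t ^ k : Aˣ) : A)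

variable {D A : Type} [DivisionRing D] [Ring A]

/-- The elementary matrix `e_{ij}(f) = I + f·E_{ij}` as an element of `GL(n, A)`. -/
def elemUnit {n : ℕ} (i j : Fin n) (hij : i ≠ j) (f : A) : (Matrix (Fin n) (Fin n) A)ˣ where
  val := 1 + Matrix.single i j f
  inv := 1 - Matrix.single i j f
  val_inv := by
    have h : Matrix.single i j f * Matrix.single i j f = 0 :=
      Matrix.single_mul_single_of_ne f i j i hij.symm f
    rw [mul_sub, mul_one, add_mul, one_mul, h]
    abel
  inv_val := by
    have h : Matrix.single i j f * Matrix.single i j f = 0 :=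
      Matrix.single_mul_single_of_ne f i j i hij.symm f
    rw [mul_add, mul_one, sub_mul, one_mul, h]
    abel

variable (ι : D →+* A) (t : Aˣ)

/-- `x_{β̇}(f)` for the affine root `β̇ = (ε_i − ε_j, m)` and `f ∈ D`. -/
def xRoot {n : ℕ} (i j : Fin n) (hij : i ≠ j) (m : ℤ) (f : D) : (Matrix (Fin n) (Fin n) A)ˣ :=
  if i < j then elemUnit i j hij (ι f * ((t ^ m : Aˣ) : A))
  else elemUnit i j hij (((t ^ m : Aˣ) : A) * ι f)

/-- `w_{β̇}(u) = x_{β̇}(u)·x_{−β̇}(−u⁻¹)·x_{β̇}(u)` for `u ∈ D^×`. -/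
def wRoot {n : ℕ} (i j : Fin n) (hij : i ≠ j) (m : ℤ) (u : Dˣ) : (Matrix (Fin n) (Fin n) A)ˣ :=
  xRoot ι t i j hij m (u : D) * xRoot ι t j i hij.symm (-m) (-((u⁻¹ : Dˣ) : D)) *
    xRoot ι t i j hij m (u : D)

/-- `h_{β̇}(u) = w_{β̇}(u)·w_{(β,0)}(−1)`. -/
def hRoot {n : ℕ} (i j : Fin n) (hij : i ≠ j) (m : ℤ) (u : Dˣ) : (Matrix (Fin n) (Fin n) A)ˣ :=
  wRoot ι t i j hij m u * wRoot ι t i j hij 0 (-1)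

/-- Membership of `(ε_i − ε_j, m)` in `Δ_a⁺ = (Δ⁺ × ℤ_{≥0}) ∪ (Δ⁻ × ℤ_{>0})`. -/
def AffPos {n : ℕ} (i j : Fin n) (m : ℤ) : Prop := (i < j ∧ 0 ≤ m) ∨ (j < i ∧ 0 < m)

/-- Membership of `(ε_i − ε_j, m)` in `Δ_a⁻ = (Δ⁺ × ℤ_{<0}) ∪ (Δ⁻ × ℤ_{≤0})`. -/
def AffNeg {n : ℕ} (i j : Fin n) (m : ℤ) : Prop := (i < j ∧ m < 0) ∨ (j < i ∧ m ≤ 0)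

/-- `(ε_i − ε_j, m)` belongs to the affine simple system
`Π_a = {(α_i, 0)} ∪ {(−θ, 1)}`. -/
def SimpleAff (n : ℕ) (i j : Fin n) (m : ℤ) : Prop :=
  ((j : ℕ) = (i : ℕ) + 1 ∧ m = 0) ∨ ((i : ℕ) = n - 1 ∧ (j : ℕ) = 0 ∧ m = 1)

/-- `U⁺` (for `pos = true`) resp. `U⁻` (for `pos = false`). -/
def Ugrp (n : ℕ) (pos : Bool) : Subgroup (Matrix (Fin n) (Fin n) A)ˣ :=
  Subgroup.closure {g | ∃ (i j : Fin n) (hij : i ≠ j) (m : ℤ) (f : D),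
    (if pos then AffPos i j m else AffNeg i j m) ∧ g = xRoot ι t i j hij m f}

/-- The subgroup `N` generated by all `w_{β̇}(u)`. -/
def Ngrp (n : ℕ) : Subgroup (Matrix (Fin n) (Fin n) A)ˣ :=
  Subgroup.closure {g | ∃ (i j : Fin n) (hij : i ≠ j) (m : ℤ) (u : Dˣ),
    g = wRoot ι t i j hij m u}

/-- The subgroup `T` generated by all `h_{β̇}(u)`. -/
def Tgrp (n : ℕ) : Subgroup (Matrix (Fin n) (Fin n) A)ˣ :=
  Subgroup.closure {g | ∃ (i j : Fin n) (hij : i ≠ j) (m : ℤ) (u : Dˣ),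
    g = hRoot ι t i j hij m u}

/-- `T₀`: the subgroup generated by the elements of `T` all of whose diagonal
entries have `t`-degree `0`, i.e. lie in `ι(D^×)`. -/
def T0grp (n : ℕ) : Subgroup (Matrix (Fin n) (Fin n) A)ˣ :=
  Subgroup.closure {h | h ∈ Tgrp ι t n ∧
    ∀ i : Fin n, ∃ s : D, s ≠ 0 ∧ (h : (Matrix (Fin n) (Fin n) A)ˣ).val i i = ι s}

/-- `B⁺ = ⟨U⁺, T₀⟩` resp. `B⁻ = ⟨U⁻, T₀⟩`. -/
def Bgrp (n : ℕ) (pos : Bool) : Subgroup (Matrix (Fin n) (Fin n) A)ˣ :=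
  Ugrp ι t n pos ⊔ T0grp ι t n

/-- The elementary group `E(n, D_τ)`, generated by all `x_{β̇}(f)`, `β̇ ∈ Δ_a`, `f ∈ D`. -/
def Egrp (n : ℕ) : Subgroup (Matrix (Fin n) (Fin n) A)ˣ :=
  Subgroup.closure {g | ∃ (i j : Fin n) (hij : i ≠ j) (m : ℤ) (f : D),
    g = xRoot ι t i j hij m f}

/-- The elementary group `E(n, D_τ)`, generated by the `I + f·E_{ij}`, `f ∈ D_τ`. -/
def EgrpL (n : ℕ) : Subgroup (Matrix (Fin n) (Fin n) A)ˣ :=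
  Subgroup.closure {g | ∃ (i j : Fin n) (hij : i ≠ j) (f : A), g = elemUnit i j hij f}

/-- The subgroup `U'_{β̇}` (for either sign, according to `pos`). -/
def Uprime {n : ℕ} (i j : Fin n) (hij : i ≠ j) (m : ℤ) (pos : Bool) :
    Subgroup (Matrix (Fin n) (Fin n) A)ˣ :=
  Subgroup.closure {h | ∃ (g f : D) (k l : Fin n) (hkl : k ≠ l) (m' : ℤ),
    (if pos then AffPos k l m' else AffNeg k l m') ∧ ¬(k = i ∧ l = j ∧ m' = m) ∧
    h = xRoot ι t i j hij m g * xRoot ι t k l hkl m' f * (xRoot ι t i j hij m g)⁻¹}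

/-- The root subgroup `U_{β̇} = {x_{β̇}(f) : f ∈ D}`. -/
def UrootSet {n : ℕ} (i j : Fin n) (hij : i ≠ j) (m : ℤ) :
    Set (Matrix (Fin n) (Fin n) A)ˣ :=
  {g | ∃ f : D, g = xRoot ι t i j hij m f}

variable {D A : Type} [DivisionRing D] [Ring A]

/-- The subring `D[t] ⊆ D_τ` of elements supported on nonnegative powers of `t`. -/
def DPoly (ι : D →+* A) (t : Aˣ) : Set A :=
  {x | ∃ c : ℤ →₀ D, (∀ k : ℤ, k < 0 → c k = 0) ∧
    x = c.sum fun k a => ι a * ((t ^ k : Aˣ) : A)}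

/-- `D[t]·t ⊆ D_τ`: elements supported on strictly positive powers of `t`. -/
def DPolyT (ι : D →+* A) (t : Aˣ) : Set A :=
  {x | ∃ c : ℤ →₀ D, (∀ k : ℤ, k ≤ 0 → c k = 0) ∧
    x = c.sum fun k a => ι a * ((t ^ k : Aˣ) : A)}

/-- `U₁ = {I + f·E₁₂ : f ∈ D[t]}` (a subgroup of `GL(2,D_τ)`). -/
def U1grp (ι : D →+* A) (t : Aˣ) : Subgroup (Matrix (Fin 2) (Fin 2) A)ˣ :=
  Subgroup.closure {g | ∃ f ∈ DPoly ι t, g = elemUnit 0 1 (by decide) f}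

/-- `U₂ = {I + g·E₂₁ : g ∈ D[t]·t}` (a subgroup of `GL(2,D_τ)`). -/
def U2grp (ι : D →+* A) (t : Aˣ) : Subgroup (Matrix (Fin 2) (Fin 2) A)ˣ :=
  Subgroup.closure {g | ∃ f ∈ DPolyT ι t, g = elemUnit 1 0 (by decide) f}


namespace Aux
section AlgebraPart


variable {D A : Type} [DivisionRing D] [Ring A] {τ : D ≃+* D} {ι : D →+* A} {t : Aˣ}

noncomputable def co (hA : IsSkewLaurent τ ι t) (x : A) : ℤ →₀ D :=
  (hA.repr_unique x).choose

variable (hA : IsSkewLaurent τ ι t)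
include hA

lemma co_spec (x : A) : x = (co hA x).sum fun k a => ι a * ((t ^ k : Aˣ) : A) :=
  (hA.repr_unique x).choose_spec.1

lemma co_unique {x : A} {c : ℤ →₀ D}
    (h : x = c.sum fun k a => ι a * ((t ^ k : Aˣ) : A)) : co hA x = c :=
  ((hA.repr_unique x).choose_spec.2 c h).symm

lemma co_zero : co hA (0 : A) = 0 :=
  co_unique hA (by rw [Finsupp.sum_zero_index])

lemma co_single (k : ℤ) (a : D) :
    co hA (ι a * ((t ^ k : Aˣ) : A)) = Finsupp.single k a :=
  co_unique hA (by rw [Finsupp.sum_single_index (by simp)])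

lemma co_add (x y : A) : co hA (x + y) = co hA x + co hA y :=
  co_unique hA (by
    rw [Finsupp.sum_add_index' (by simp) (by intro k a b; rw [map_add, add_mul]),
      ← co_spec hA x, ← co_spec hA y])

lemma eq_zero_of_co_eq_zero {x : A} (h : co hA x = 0) : x = 0 := by
  have := co_spec hA x
  rw [h, Finsupp.sum_zero_index] at this
  exact this

noncomputable def deg (x : A) : WithBot ℤ := (co hA x).support.max

lemma deg_zero : deg hA (0 : A) = ⊥ := by
  simp [deg, co_zero]

lemma deg_eq_bot_iff {x : A} : deg hA x = ⊥ ↔ x = 0 := by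
  constructor
  · intro h
    exact eq_zero_of_co_eq_zero hA
      (Finsupp.support_eq_empty.mp (Finset.max_eq_bot.mp h))
  · rintro rfl; exact deg_zero hA

lemma co_eq_zero_of_deg_lt {x : A} {k : ℤ} (h : deg hA x < (k : WithBot ℤ)) :
    co hA x k = 0 := by
  by_contra hk
  exact absurd (Finset.le_max (Finsupp.mem_support_iff.mpr hk)) (not_le_of_gt h)

lemma deg_le {x : A} {d : ℤ} (h : ∀ k : ℤ, d < k → co hA x k = 0) :
    deg hA x ≤ (d : WithBot ℤ) := by
  refine Finset.max_le fun k hk => ?_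
  by_contra hlt
  push_neg at hlt
  rw [WithBot.coe_lt_coe] at hlt
  exact Finsupp.mem_support_iff.mp hk (h k hlt)

lemma deg_eq {x : A} {d : ℤ} (h : ∀ k : ℤ, d < k → co hA x k = 0)
    (h2 : co hA x d ≠ 0) : deg hA x = (d : WithBot ℤ) :=
  le_antisymm (deg_le hA h) (Finset.le_max (Finsupp.mem_support_iff.mpr h2))

lemma exists_deg {x : A} (hx : x ≠ 0) :
    ∃ d : ℤ, deg hA x = (d : WithBot ℤ) ∧ co hA x d ≠ 0 := by
  obtain ⟨d, hd⟩ := WithBot.ne_bot_iff_exists.mp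
    (fun h => hx ((deg_eq_bot_iff hA).mp h))
  exact ⟨d, hd.symm, Finsupp.mem_support_iff.mp (Finset.mem_of_max hd.symm)⟩

lemma t_comm (a : D) : (t : A) * ι a = ι (τ a) * (t : A) := by
  have := hA.conj_eq a
  calc (t : A) * ι a = (t : A) * ι a * ((t⁻¹ : Aˣ) : A) * (t : A) := by
        rw [Units.inv_mul_cancel_right]
    _ = ι (τ a) * (t : A) := by rw [this]

lemma tinv_comm (a : D) : ((t⁻¹ : Aˣ) : A) * ι a = ι (τ.symm a) * ((t⁻¹ : Aˣ) : A) := by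
  have h := t_comm hA (τ.symm a)
  rw [RingEquiv.apply_symm_apply] at h
  have h2 : ι (τ.symm a) = ((t⁻¹ : Aˣ) : A) * (ι a * (t : A)) := by
    rw [← h, Units.inv_mul_cancel_left]
  rw [h2, ← mul_assoc, mul_assoc (((t⁻¹ : Aˣ) : A) * ι a), Units.mul_inv, mul_one]

lemma tpow_comm (k : ℤ) : ∀ a : D,
    ((t ^ k : Aˣ) : A) * ι a = ι ((τ ^ k) a) * ((t ^ k : Aˣ) : A) := by
  induction k using Int.induction_on with
  | zero => intro a; simp
  | succ n ih =>
      intro a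
      have h1 : (t ^ ((n : ℤ) + 1) : Aˣ) = t ^ (n : ℤ) * t := by
        rw [zpow_add_one]
      have h2 : (τ ^ ((n : ℤ) + 1)) a = (τ ^ (n : ℤ)) (τ a) := by
        rw [zpow_add_one]; rfl
      rw [h1, h2, Units.val_mul, mul_assoc, t_comm hA, ← mul_assoc, ih (τ a),
        mul_assoc]
  | pred n ih =>
      intro a
      have h1 : (t ^ (-(n : ℤ) - 1) : Aˣ) = t ^ (-(n : ℤ)) * t⁻¹ := by
        rw [← zpow_neg_one, ← zpow_add]; ring_nf
      have h2 : (τ ^ (-(n : ℤ) - 1)) a = (τ ^ (-(n : ℤ))) (τ.symm a) := by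
        have h3 : τ ^ (-(n : ℤ) - 1) = τ ^ (-(n : ℤ)) * (τ ^ (1 : ℤ))⁻¹ := by
          rw [← zpow_neg, ← zpow_add]; ring_nf
        rw [h3]; simp only [zpow_one]; rfl
      rw [h1, h2, Units.val_mul, mul_assoc, tinv_comm hA, ← mul_assoc,
        ih (τ.symm a), mul_assoc]

lemma single_mul_single (k l : ℤ) (a b : D) :
    (ι a * ((t ^ k : Aˣ) : A)) * (ι b * ((t ^ l : Aˣ) : A)) =
      ι (a * (τ ^ k) b) * ((t ^ (k + l) : Aˣ) : A) := by
  rw [map_mul, mul_assoc, ← mul_assoc ((t ^ k : Aˣ) : A), tpow_comm hA,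
    mul_assoc, ← Units.val_mul, ← zpow_add, ← mul_assoc]

lemma co_mul (x y : A) :
    co hA (x * y) = (co hA x).sum fun k a =>
      (co hA y).sum fun l b => Finsupp.single (k + l) (a * (τ ^ k) b) := by
  refine co_unique hA ?_
  have hx := co_spec hA x
  have hy := co_spec hA y
  calc x * y = (co hA x).sum fun k a =>
        (co hA y).sum fun l b =>
          (ι a * ((t ^ k : Aˣ) : A)) * (ι b * ((t ^ l : Aˣ) : A)) := by
        conv_lhs => rw [hx, hy]
        rw [Finsupp.sum_mul]
        exact Finsupp.sum_congr fun k _ => Finsupp.mul_sum _ _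
    _ = (co hA x).sum fun k a => (co hA y).sum fun l b =>
          ι (a * (τ ^ k) b) * ((t ^ (k + l) : Aˣ) : A) := by
        refine Finsupp.sum_congr fun k _ => Finsupp.sum_congr fun l _ => ?_
        exact single_mul_single hA k l _ _
    _ = ((co hA x).sum fun k a => (co hA y).sum fun l b =>
          Finsupp.single (k + l) (a * (τ ^ k) b)).sum
            fun k a => ι a * ((t ^ k : Aˣ) : A) := by
        rw [Finsupp.sum_sum_index (by simp) (by intro k a b; rw [map_add, add_mul])]
        refine Finsupp.sum_congr fun k _ => ?_
        rw [Finsupp.sum_sum_index (by simp) (by intro k a b; rw [map_add, add_mul])]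
        refine Finsupp.sum_congr fun l _ => ?_
        rw [Finsupp.sum_single_index (by simp)]

lemma co_mul_apply (x y : A) (m : ℤ) :
    co hA (x * y) m = (co hA x).sum fun k a =>
      (co hA y).sum fun l b => if k + l = m then a * (τ ^ k) b else 0 := by
  rw [co_mul hA, Finsupp.sum_apply]
  refine Finsupp.sum_congr fun k _ => ?_
  rw [Finsupp.sum_apply]
  refine Finsupp.sum_congr fun l _ => ?_
  rw [Finsupp.single_apply]

lemma co_mul_top {x y : A} {d e : ℤ}
    (hx : ∀ k : ℤ, d < k → co hA x k = 0) (hy : ∀ l : ℤ, e < l → co hA y l = 0) :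
    co hA (x * y) (d + e) = co hA x d * (τ ^ d) (co hA y e) := by
  rw [co_mul_apply hA x y (d + e)]
  rw [Finsupp.sum]
  rw [Finset.sum_eq_single d]
  · rw [Finsupp.sum, Finset.sum_eq_single e]
    · simp
    · intro l hl hle
      have : l ≤ e := by
        by_contra h; push_neg at h
        exact Finsupp.mem_support_iff.mp hl (hy l h)
      rw [if_neg (by omega)]
    · intro he
      rw [Finsupp.notMem_support_iff.mp he]
      simp
  · intro k hk hkd
    have hkle : k ≤ d := by
      by_contra h; push_neg at h
      exact Finsupp.mem_support_iff.mp hk (hx k h)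
    rw [Finsupp.sum]
    refine Finset.sum_eq_zero fun l hl => ?_
    have : l ≤ e := by
      by_contra h; push_neg at h
      exact Finsupp.mem_support_iff.mp hl (hy l h)
    rw [if_neg (by omega)]
  · intro hd
    rw [Finsupp.notMem_support_iff.mp hd]
    simp

lemma co_mul_bound {x y : A} {d e : ℤ}
    (hx : ∀ k : ℤ, d < k → co hA x k = 0) (hy : ∀ l : ℤ, e < l → co hA y l = 0) :
    ∀ m : ℤ, d + e < m → co hA (x * y) m = 0 := by
  intro m hm
  rw [co_mul_apply hA x y m, Finsupp.sum]
  refine Finset.sum_eq_zero fun k hk => ?_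
  have hkd : k ≤ d := by
    by_contra h; push_neg at h
    exact Finsupp.mem_support_iff.mp hk (hx k h)
  rw [Finsupp.sum]
  refine Finset.sum_eq_zero fun l hl => ?_
  have : l ≤ e := by
    by_contra h; push_neg at h
    exact Finsupp.mem_support_iff.mp hl (hy l h)
  rw [if_neg (by omega)]

lemma deg_mul (x y : A) : deg hA (x * y) = deg hA x + deg hA y := by
  rcases eq_or_ne x 0 with rfl | hx
  · simp [deg_zero hA]
  rcases eq_or_ne y 0 with rfl | hy
  · simp [deg_zero hA]
  obtain ⟨d, hd, hcd⟩ := exists_deg hA hx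
  obtain ⟨e, he, hce⟩ := exists_deg hA hy
  have hxb : ∀ k : ℤ, d < k → co hA x k = 0 := fun k hk =>
    co_eq_zero_of_deg_lt hA (by rw [hd]; exact_mod_cast hk)
  have hyb : ∀ l : ℤ, e < l → co hA y l = 0 := fun l hl =>
    co_eq_zero_of_deg_lt hA (by rw [he]; exact_mod_cast hl)
  have htop : co hA (x * y) (d + e) ≠ 0 := by
    rw [co_mul_top hA hxb hyb]
    refine mul_ne_zero hcd fun h => hce ?_
    have := congrArg (τ ^ d).symm h
    simpa using this
  rw [hd, he, ← WithBot.coe_add]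
  exact deg_eq hA (co_mul_bound hA hxb hyb) htop

lemma mul_ne_zero' {x y : A} (hx : x ≠ 0) (hy : y ≠ 0) : x * y ≠ 0 := by
  intro h
  have := deg_mul hA x y
  rw [h, deg_zero hA] at this
  obtain ⟨d, hd, -⟩ := exists_deg hA hx
  obtain ⟨e, he, -⟩ := exists_deg hA hy
  rw [hd, he, ← WithBot.coe_add] at this
  exact WithBot.bot_ne_coe this

lemma deg_one : deg hA (1 : A) = (0 : ℤ) := by
  have h1 : (1 : A) = ι 1 * ((t ^ (0 : ℤ) : Aˣ) : A) := by simp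
  have : co hA (1 : A) = Finsupp.single 0 1 := by
    rw [h1, co_single hA]
  rw [deg, this, Finsupp.support_single_ne_zero _ one_ne_zero]
  rfl

lemma deg_add_eq_left {x y : A} (h : deg hA y < deg hA x) :
    deg hA (x + y) = deg hA x ∧ x + y ≠ 0 := by
  have hx : x ≠ 0 := by
    intro hx0
    rw [hx0, deg_zero hA] at h
    exact not_lt_bot h
  obtain ⟨d, hd, hcd⟩ := exists_deg hA hx
  have hyd : co hA y d = 0 := co_eq_zero_of_deg_lt hA (hd ▸ h)
  have htop : co hA (x + y) d ≠ 0 := by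
    rw [co_add hA, Finsupp.add_apply, hyd, add_zero]
    exact hcd
  have hbound : ∀ k : ℤ, d < k → co hA (x + y) k = 0 := by
    intro k hk
    rw [co_add hA, Finsupp.add_apply,
      co_eq_zero_of_deg_lt hA (by rw [hd]; exact_mod_cast hk),
      co_eq_zero_of_deg_lt hA (lt_trans (hd ▸ h) (by exact_mod_cast hk)), add_zero]
  refine ⟨by rw [deg_eq hA hbound htop, hd], fun h0 => htop (by rw [h0, co_zero]; rfl)⟩


end AlgebraPart

section Matrix2

variable {D A : Type} [DivisionRing D] [Ring A] {τ : D ≃+* D} {ι : D →+* A} {t : Aˣ}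
variable (hA : IsSkewLaurent τ ι t)

include hA in
lemma one_ne_zero' : (1 : A) ≠ 0 := fun h => by
  have : ι (1 : D) = ι 0 := by simp [h]
  simpa using hA.injective this

lemma deg_DPoly {f : A} (hf : f ∈ DPoly ι t) (h0 : f ≠ 0) :
    ∃ d : ℤ, deg hA f = (d : WithBot ℤ) ∧ 0 ≤ d := by
  obtain ⟨c, hneg, hsum⟩ := hf
  have hco : co hA f = c := co_unique hA hsum
  obtain ⟨d, hd, hcd⟩ := exists_deg hA h0
  refine ⟨d, hd, ?_⟩
  by_contra h
  push_neg at h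
  exact hcd (by rw [hco]; exact hneg d h)

lemma deg_DPolyT {g : A} (hg : g ∈ DPolyT ι t) (h0 : g ≠ 0) :
    ∃ d : ℤ, deg hA g = (d : WithBot ℤ) ∧ 1 ≤ d := by
  obtain ⟨c, hneg, hsum⟩ := hg
  have hco : co hA g = c := co_unique hA hsum
  obtain ⟨d, hd, hcd⟩ := exists_deg hA h0
  refine ⟨d, hd, ?_⟩
  by_contra h
  push_neg at h
  exact hcd (by rw [hco]; exact hneg d (by omega))

def RE (x y : A) : Prop := y ≠ 0 ∧ deg hA x ≤ deg hA y

def RF (x y : A) : Prop := x ≠ 0 ∧ deg hA y < deg hA x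

lemma stepE {x y f : A} (h : RF hA x y) (hf0 : f ≠ 0) (hf : f ∈ DPoly ι t) :
    RE hA x (x * f + y) := by
  obtain ⟨df, hdf, hdf0⟩ := deg_DPoly hA hf hf0
  obtain ⟨dx, hdx, -⟩ := exists_deg hA h.1
  have hxf : deg hA x ≤ deg hA (x * f) := by
    rw [deg_mul hA, hdx, hdf, ← WithBot.coe_add, WithBot.coe_le_coe]
    omega
  have hlt : deg hA y < deg hA (x * f) := lt_of_lt_of_le h.2 hxf
  obtain ⟨hdeq, hne⟩ := deg_add_eq_left hA hlt
  exact ⟨hne, by rw [hdeq]; exact hxf⟩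

lemma stepF {x y g : A} (h : RE hA x y) (hg0 : g ≠ 0) (hg : g ∈ DPolyT ι t) :
    RF hA (x + y * g) y := by
  obtain ⟨dg, hdg, hdg1⟩ := deg_DPolyT hA hg hg0
  obtain ⟨dy, hdy, -⟩ := exists_deg hA h.1
  have hyg : deg hA y < deg hA (y * g) := by
    rw [deg_mul hA, hdy, hdg, ← WithBot.coe_add, WithBot.coe_lt_coe]
    omega
  have hlt : deg hA x < deg hA (y * g) := lt_of_le_of_lt h.2 hyg
  obtain ⟨hdeq, hne⟩ := deg_add_eq_left hA hlt
  rw [add_comm (y * g) x] at hdeq hne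
  exact ⟨hne, by rw [hdeq]; exact hyg⟩

def StE (P : Matrix (Fin 2) (Fin 2) A) : Prop :=
  RE hA (P 0 0) (P 0 1) ∧ RE hA (P 1 0) (P 1 1)

def StF (P : Matrix (Fin 2) (Fin 2) A) : Prop :=
  RF hA (P 0 0) (P 0 1) ∧ RF hA (P 1 0) (P 1 1)

lemma entryE0 (P : Matrix (Fin 2) (Fin 2) A) (f : A) (i : Fin 2) :
    (P * (1 + Matrix.single (0 : Fin 2) (1 : Fin 2) f)) i 0 = P i 0 := by
  rw [mul_add, mul_one, Matrix.add_apply,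
    Matrix.mul_single_apply_of_ne (hbj := by decide), add_zero]

lemma entryE1 (P : Matrix (Fin 2) (Fin 2) A) (f : A) (i : Fin 2) :
    (P * (1 + Matrix.single (0 : Fin 2) (1 : Fin 2) f)) i 1 = P i 0 * f + P i 1 := by
  rw [mul_add, mul_one, Matrix.add_apply,
    Matrix.mul_single_apply_same, add_comm]

lemma entryF0 (P : Matrix (Fin 2) (Fin 2) A) (g : A) (i : Fin 2) :
    (P * (1 + Matrix.single (1 : Fin 2) (0 : Fin 2) g)) i 0 = P i 0 + P i 1 * g := by
  rw [mul_add, mul_one, Matrix.add_apply,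
    Matrix.mul_single_apply_same]

lemma entryF1 (P : Matrix (Fin 2) (Fin 2) A) (g : A) (i : Fin 2) :
    (P * (1 + Matrix.single (1 : Fin 2) (0 : Fin 2) g)) i 1 = P i 1 := by
  rw [mul_add, mul_one, Matrix.add_apply,
    Matrix.mul_single_apply_of_ne (hbj := by decide), add_zero]

lemma stF_mulE {P : Matrix (Fin 2) (Fin 2) A} {f : A} (h : StF hA P)
    (hf0 : f ≠ 0) (hf : f ∈ DPoly ι t) :
    StE hA (P * (1 + Matrix.single (0 : Fin 2) (1 : Fin 2) f)) := by
  constructor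
  · rw [entryE0, entryE1]
    exact stepE hA h.1 hf0 hf
  · rw [entryE0, entryE1]
    exact stepE hA h.2 hf0 hf

lemma stE_mulF {P : Matrix (Fin 2) (Fin 2) A} {g : A} (h : StE hA P)
    (hg0 : g ≠ 0) (hg : g ∈ DPolyT ι t) :
    StF hA (P * (1 + Matrix.single (1 : Fin 2) (0 : Fin 2) g)) := by
  constructor
  · rw [entryF0, entryF1]
    exact stepF hA h.1 hg0 hg
  · rw [entryF0, entryF1]
    exact stepF hA h.2 hg0 hg

lemma stE_elem {f : A} (hf0 : f ≠ 0) (hf : f ∈ DPoly ι t) :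
    StE hA (elemUnit (0 : Fin 2) 1 (by decide) f).val := by
  obtain ⟨df, hdf, hdf0⟩ := deg_DPoly hA hf hf0
  have h00 : (elemUnit (0 : Fin 2) 1 (by decide) f).val 0 0 = 1 := by
    simp [elemUnit, Matrix.one_apply, Matrix.single]
  have h01 : (elemUnit (0 : Fin 2) 1 (by decide) f).val 0 1 = f := by
    simp [elemUnit, Matrix.one_apply, Matrix.single]
  have h10 : (elemUnit (0 : Fin 2) 1 (by decide) f).val 1 0 = 0 := by
    simp [elemUnit, Matrix.one_apply, Matrix.single]
  have h11 : (elemUnit (0 : Fin 2) 1 (by decide) f).val 1 1 = 1 := by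
    simp [elemUnit, Matrix.one_apply, Matrix.single]
  constructor
  · rw [h00, h01]
    exact ⟨hf0, by rw [deg_one hA, hdf]; exact_mod_cast hdf0⟩
  · rw [h10, h11]
    exact ⟨one_ne_zero' hA, by rw [deg_zero hA]; exact bot_le⟩

lemma stF_elem {g : A} (hg0 : g ≠ 0) (hg : g ∈ DPolyT ι t) :
    StF hA (elemUnit (1 : Fin 2) 0 (by decide) g).val := by
  obtain ⟨dg, hdg, hdg1⟩ := deg_DPolyT hA hg hg0
  have h00 : (elemUnit (1 : Fin 2) 0 (by decide) g).val 0 0 = 1 := by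
    simp [elemUnit, Matrix.one_apply, Matrix.single]
  have h01 : (elemUnit (1 : Fin 2) 0 (by decide) g).val 0 1 = 0 := by
    simp [elemUnit, Matrix.one_apply, Matrix.single]
  have h10 : (elemUnit (1 : Fin 2) 0 (by decide) g).val 1 0 = g := by
    simp [elemUnit, Matrix.one_apply, Matrix.single]
  have h11 : (elemUnit (1 : Fin 2) 0 (by decide) g).val 1 1 = 1 := by
    simp [elemUnit, Matrix.one_apply, Matrix.single]
  constructor
  · rw [h00, h01]
    refine ⟨one_ne_zero' hA, ?_⟩
    rw [deg_zero hA, deg_one hA]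
    exact WithBot.bot_lt_coe 0
  · rw [h10, h11]
    refine ⟨hg0, ?_⟩
    rw [deg_one hA, hdg]
    exact_mod_cast (by omega : (0 : ℤ) < dg)

lemma key (r : ℕ) (bs : Fin (r + 1) → Bool) (q : Fin (r + 1) → A)
    (hq : ∀ i, q i ≠ 0)
    (h1 : ∀ i, bs i = true → q i ∈ DPoly ι t)
    (h2 : ∀ i, bs i = false → q i ∈ DPolyT ι t)
    (halt : ∀ (i : ℕ) (hi : i + 1 < r + 1), bs ⟨i, by omega⟩ ≠ bs ⟨i + 1, hi⟩) :
    (bs (Fin.last r) = true →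
      StE hA ((List.ofFn fun i : Fin (r + 1) =>
        if bs i then elemUnit (0 : Fin 2) 1 (by decide) (q i)
        else elemUnit (1 : Fin 2) 0 (by decide) (q i)).prod.val)) ∧
    (bs (Fin.last r) = false →
      StF hA ((List.ofFn fun i : Fin (r + 1) =>
        if bs i then elemUnit (0 : Fin 2) 1 (by decide) (q i)
        else elemUnit (1 : Fin 2) 0 (by decide) (q i)).prod.val)) := by
  induction r with
  | zero =>
      constructor <;> intro hb <;>
        · rw [List.ofFn_succ, List.ofFn_zero, List.prod_cons, List.prod_nil, mul_one]
          have h0 : Fin.last 0 = (0 : Fin 1) := rfl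
          rw [h0] at hb
          first
          | (rw [if_pos hb]; exact stE_elem hA (hq 0) (h1 0 hb))
          | (rw [if_neg (by rw [hb]; exact Bool.false_ne_true)]
             exact stF_elem hA (hq 0) (h2 0 hb))
  | succ r IH =>
      have hsplit : (List.ofFn fun i : Fin (r + 2) =>
          if bs i then elemUnit (0 : Fin 2) 1 (by decide) (q i)
          else elemUnit (1 : Fin 2) 0 (by decide) (q i)) =
        (List.ofFn fun i : Fin (r + 1) =>
          if bs i.castSucc then elemUnit (0 : Fin 2) 1 (by decide) (q i.castSucc)
          else elemUnit (1 : Fin 2) 0 (by decide) (q i.castSucc)).concat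
        (if bs (Fin.last (r + 1)) then
            elemUnit (0 : Fin 2) 1 (by decide) (q (Fin.last (r + 1)))
          else elemUnit (1 : Fin 2) 0 (by decide) (q (Fin.last (r + 1)))) :=
        List.ofFn_succ' _
      have IH' := IH (fun i => bs i.castSucc) (fun i => q i.castSucc)
        (fun i => hq _) (fun i h => h1 _ h) (fun i h => h2 _ h)
        (fun i hi => by
          have := halt i (by omega)
          simpa [Fin.castSucc_mk] using this)
      have hlast : (Fin.last r).castSucc = (⟨r, by omega⟩ : Fin (r + 2)) := rfl
      have hlast2 : (Fin.last (r + 1)) = (⟨r + 1, by omega⟩ : Fin (r + 2)) := rfl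
      have hne := halt r (by omega)
      rw [← hlast, ← hlast2] at hne
      constructor <;> intro hb
      · -- last is true, so previous ends false
        have hprev : bs (Fin.last r).castSucc = false := by
          rcases Bool.eq_false_or_eq_true (bs (Fin.last r).castSucc) with h | h
          · exact absurd (h.trans hb.symm) hne
          · exact h
        have hP := IH'.2 hprev
        rw [hsplit, List.prod_concat, if_pos hb, Units.val_mul]
        exact stF_mulE hA hP (hq _) (h1 _ hb)
      · have hprev : bs (Fin.last r).castSucc = true := by
          rcases Bool.eq_false_or_eq_true (bs (Fin.last r).castSucc) with h | h
          · exact h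
          · exact absurd (h.trans hb.symm) hne
        have hP := IH'.1 hprev
        rw [hsplit, List.prod_concat, if_neg (by rw [hb]; exact Bool.false_ne_true),
          Units.val_mul]
        exact stE_mulF hA hP (hq _) (h2 _ hb)

include hA in
lemma alt_prod_ne_one (r : ℕ) (hr : 0 < r) (bs : Fin r → Bool) (q : Fin r → A)
    (hq : ∀ i, q i ≠ 0)
    (h1 : ∀ i, bs i = true → q i ∈ DPoly ι t)
    (h2 : ∀ i, bs i = false → q i ∈ DPolyT ι t)
    (halt : ∀ (i : ℕ) (hi : i + 1 < r), bs ⟨i, Nat.lt_of_succ_lt hi⟩ ≠ bs ⟨i + 1, hi⟩) :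
    (List.ofFn fun i : Fin r =>
      if bs i then elemUnit (0 : Fin 2) 1 (by decide) (q i)
      else elemUnit (1 : Fin 2) 0 (by decide) (q i)).prod ≠ 1 := by
  obtain ⟨r', rfl⟩ : ∃ r', r = r' + 1 := ⟨r - 1, by omega⟩
  have hk := key hA r' bs q hq h1 h2 halt
  intro hcontra
  rcases Bool.eq_false_or_eq_true (bs (Fin.last r')) with hb | hb
  · have := (hk.1 hb).1.1
    rw [hcontra] at this
    exact this (Matrix.one_apply_ne (by decide : (0 : Fin 2) ≠ 1))
  · have := (hk.2 hb).2.1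
    rw [hcontra] at this
    exact this (Matrix.one_apply_ne (by decide : (1 : Fin 2) ≠ 0))

end Matrix2


section Groups

variable {D A : Type} [DivisionRing D] [Ring A] {τ : D ≃+* D} {ι : D →+* A} {t : Aˣ}
variable (hA : IsSkewLaurent τ ι t)

lemma elemUnit_mul {n : ℕ} (i j : Fin n) (hij : i ≠ j) (f f' : A) :
    elemUnit i j hij f * elemUnit i j hij f' = elemUnit i j hij (f + f') := by
  refine Units.ext ?_
  show (1 + Matrix.single i j f) * (1 + Matrix.single i j f') =
    1 + Matrix.single i j (f + f')
  have h0 : Matrix.single i j f * Matrix.single i j f' = 0 :=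
    Matrix.single_mul_single_of_ne f i j i hij.symm f'
  rw [add_mul, one_mul, mul_add, mul_one, h0, add_zero, Matrix.single_add]
  abel

lemma elemUnit_zero {n : ℕ} (i j : Fin n) (hij : i ≠ j) :
    elemUnit i j hij (0 : A) = 1 := by
  refine Units.ext ?_
  show 1 + Matrix.single i j (0 : A) = 1
  rw [Matrix.single_zero, add_zero]

lemma elemUnit_inv {n : ℕ} (i j : Fin n) (hij : i ≠ j) (f : A) :
    (elemUnit i j hij f)⁻¹ = elemUnit i j hij (-f) := by
  refine Units.ext ?_
  show 1 - Matrix.single i j f = 1 + Matrix.single i j (-f)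
  rw [sub_eq_add_neg]
  congr 1
  ext a b
  simp [Matrix.single]
  split <;> simp

lemma elem01_entry (f : A) : (elemUnit (0 : Fin 2) 1 (by decide) f).val 0 1 = f := by
  show (1 + Matrix.single (0 : Fin 2) (1 : Fin 2) f) 0 1 = f
  simp [Matrix.one_apply, Matrix.single]

lemma elem10_entry (g : A) : (elemUnit (1 : Fin 2) 0 (by decide) g).val 1 0 = g := by
  show (1 + Matrix.single (1 : Fin 2) (0 : Fin 2) g) 1 0 = g
  simp [Matrix.one_apply, Matrix.single]

include hA

lemma mem_DPoly_iff {x : A} : x ∈ DPoly ι t ↔ ∀ k : ℤ, k < 0 → co hA x k = 0 := by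
  constructor
  · rintro ⟨c, hneg, hsum⟩ k hk
    rw [co_unique hA hsum]
    exact hneg k hk
  · intro h
    exact ⟨co hA x, h, co_spec hA x⟩

lemma mem_DPolyT_iff {x : A} : x ∈ DPolyT ι t ↔ ∀ k : ℤ, k ≤ 0 → co hA x k = 0 := by
  constructor
  · rintro ⟨c, hneg, hsum⟩ k hk
    rw [co_unique hA hsum]
    exact hneg k hk
  · intro h
    exact ⟨co hA x, h, co_spec hA x⟩

lemma co_neg (x : A) : co hA (-x) = -co hA x := by
  have h := co_add hA x (-x)
  rw [add_neg_cancel, co_zero hA] at h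
  exact eq_neg_of_add_eq_zero_right h.symm

lemma DPoly_zero' : (0 : A) ∈ DPoly ι t :=
  (mem_DPoly_iff hA).mpr fun k _ => by rw [co_zero hA]; rfl

lemma DPoly_add' {x y : A} (hx : x ∈ DPoly ι t) (hy : y ∈ DPoly ι t) :
    x + y ∈ DPoly ι t := by
  rw [mem_DPoly_iff hA] at *
  intro k hk
  rw [co_add hA, Finsupp.add_apply, hx k hk, hy k hk, add_zero]

lemma DPoly_neg' {x : A} (hx : x ∈ DPoly ι t) : -x ∈ DPoly ι t := by
  rw [mem_DPoly_iff hA] at *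
  intro k hk
  rw [co_neg hA, Finsupp.neg_apply, hx k hk, neg_zero]

lemma DPolyT_zero' : (0 : A) ∈ DPolyT ι t :=
  (mem_DPolyT_iff hA).mpr fun k _ => by rw [co_zero hA]; rfl

lemma DPolyT_add' {x y : A} (hx : x ∈ DPolyT ι t) (hy : y ∈ DPolyT ι t) :
    x + y ∈ DPolyT ι t := by
  rw [mem_DPolyT_iff hA] at *
  intro k hk
  rw [co_add hA, Finsupp.add_apply, hx k hk, hy k hk, add_zero]

lemma DPolyT_neg' {x : A} (hx : x ∈ DPolyT ι t) : -x ∈ DPolyT ι t := by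
  rw [mem_DPolyT_iff hA] at *
  intro k hk
  rw [co_neg hA, Finsupp.neg_apply, hx k hk, neg_zero]

lemma U1_char {u : (Matrix (Fin 2) (Fin 2) A)ˣ} (hu : u ∈ U1grp ι t) :
    ∃ f ∈ DPoly ι t, u = elemUnit (0 : Fin 2) 1 (by decide) f := by
  refine Subgroup.closure_induction (fun g hg => hg) ?_ ?_ ?_ hu
  · exact ⟨0, DPoly_zero' hA, (elemUnit_zero _ _ _).symm⟩
  · rintro x y hx hy ⟨f, hf, rfl⟩ ⟨g, hg, rfl⟩
    exact ⟨f + g, DPoly_add' hA hf hg, elemUnit_mul _ _ _ _ _⟩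
  · rintro x hx ⟨f, hf, rfl⟩
    exact ⟨-f, DPoly_neg' hA hf, elemUnit_inv _ _ _ _⟩

lemma U2_char {u : (Matrix (Fin 2) (Fin 2) A)ˣ} (hu : u ∈ U2grp ι t) :
    ∃ f ∈ DPolyT ι t, u = elemUnit (1 : Fin 2) 0 (by decide) f := by
  refine Subgroup.closure_induction (fun g hg => hg) ?_ ?_ ?_ hu
  · exact ⟨0, DPolyT_zero' hA, (elemUnit_zero _ _ _).symm⟩
  · rintro x y hx hy ⟨f, hf, rfl⟩ ⟨g, hg, rfl⟩
    exact ⟨f + g, DPolyT_add' hA hf hg, elemUnit_mul _ _ _ _ _⟩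
  · rintro x hx ⟨f, hf, rfl⟩
    exact ⟨-f, DPolyT_neg' hA hf, elemUnit_inv _ _ _ _⟩

def qOf (u : (Matrix (Fin 2) (Fin 2) A)ˣ) (b : Bool) : A :=
  if b then u.val 0 1 else u.val 1 0

def eOf (b : Bool) (f : A) : (Matrix (Fin 2) (Fin 2) A)ˣ :=
  if b then elemUnit (0 : Fin 2) 1 (by decide) f
  else elemUnit (1 : Fin 2) 0 (by decide) f

/-- Characterization of a letter of a reduced word. -/
lemma char_letter (b : Bool) (u : ↥(if b then U1grp ι t else U2grp ι t)) (hu : u ≠ 1) :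
    qOf u.1 b ≠ 0 ∧
    (b = true → qOf u.1 b ∈ DPoly ι t) ∧
    (b = false → qOf u.1 b ∈ DPolyT ι t) ∧
    u.1 = eOf b (qOf u.1 b) := by
  have hcoene : u.1 ≠ 1 := fun h => hu (Subtype.ext h)
  cases b with
  | true =>
      have hmem : u.1 ∈ U1grp ι t := by have h := u.2; simpa using h
      obtain ⟨f, hfD, hfe⟩ := U1_char hA hmem
      have hq : qOf u.1 true = f := by
        rw [qOf, if_pos rfl, hfe, elem01_entry]
      rw [hq]
      refine ⟨?_, fun _ => hfD, fun h => absurd h (by simp), ?_⟩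
      · intro h0
        rw [h0, elemUnit_zero] at hfe
        exact hcoene hfe
      · rw [eOf]
        simpa using hfe
  | false =>
      have hmem : u.1 ∈ U2grp ι t := by have h := u.2; simpa using h
      obtain ⟨f, hfD, hfe⟩ := U2_char hA hmem
      have hq : qOf u.1 false = f := by
        rw [qOf, if_neg (by simp), hfe, elem10_entry]
      rw [hq]
      refine ⟨?_, fun h => absurd h (by simp), fun _ => hfD, ?_⟩
      · intro h0
        rw [h0, elemUnit_zero] at hfe
        exact hcoene hfe
      · rw [eOf]
        simpa using hfe

end Groups

end Aux

/-- `U = ⟨U₁, U₂⟩` is the internal free product of `U₁` and `U₂`: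
the canonical homomorphism `U₁ ∗ U₂ → GL(2,D_τ)` is injective; in particular no
nonempty alternating product of nontrivial elements of `U₁` and `U₂` is the identity. -/
theorem statement_16 {D A : Type} [DivisionRing D] [Ring A]
    (τ : D ≃+* D) (ι : D →+* A) (t : Aˣ) (hA : IsSkewLaurent τ ι t) :
    Function.Injective
      (Monoid.CoprodI.lift fun b : Bool =>
        (if b then U1grp ι t else U2grp ι t).subtype) ∧
    ∀ (r : ℕ), 0 < r → ∀ (bs : Fin r → Bool) (q : Fin r → A),
      (∀ i : Fin r, q i ≠ 0) →
      (∀ i : Fin r, bs i = true → q i ∈ DPoly ι t) →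
      (∀ i : Fin r, bs i = false → q i ∈ DPolyT ι t) →
      (∀ (i : ℕ) (h1 : i + 1 < r), bs ⟨i, by omega⟩ ≠ bs ⟨i + 1, h1⟩) →
      (List.ofFn fun i : Fin r =>
        if bs i then elemUnit (0 : Fin 2) 1 (by decide) (q i)
        else elemUnit (1 : Fin 2) 0 (by decide) (q i)).prod ≠ 1 := by
  classical
  have part2 : ∀ (r : ℕ), 0 < r → ∀ (bs : Fin r → Bool) (q : Fin r → A),
      (∀ i : Fin r, q i ≠ 0) →
      (∀ i : Fin r, bs i = true → q i ∈ DPoly ι t) →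
      (∀ i : Fin r, bs i = false → q i ∈ DPolyT ι t) →
      (∀ (i : ℕ) (h1 : i + 1 < r), bs ⟨i, by omega⟩ ≠ bs ⟨i + 1, h1⟩) →
      (List.ofFn fun i : Fin r =>
        if bs i then elemUnit (0 : Fin 2) 1 (by decide) (q i)
        else elemUnit (1 : Fin 2) 0 (by decide) (q i)).prod ≠ 1 := by
    intro r hr bs q hq h1 h2 halt
    exact Aux.alt_prod_ne_one hA r hr bs q hq h1 h2 halt
  refine ⟨?_, part2⟩
  rw [injective_iff_map_eq_one]
  intro w hw
  by_contra hne
  set wd := Monoid.CoprodI.Word.equiv w with hwd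
  have hprod : wd.prod = w := by
    rw [hwd, show Monoid.CoprodI.Word.equiv w = w • Monoid.CoprodI.Word.empty from rfl,
      Monoid.CoprodI.Word.prod_smul, Monoid.CoprodI.Word.prod_empty, mul_one]
  set L := wd.toList with hLdef
  have hLne : L ≠ [] := by
    intro h
    apply hne
    have hwe : wd = Monoid.CoprodI.Word.empty :=
      Monoid.CoprodI.Word.ext (by rw [← hLdef, h]; rfl)
    rw [← hprod, hwe, Monoid.CoprodI.Word.prod_empty]
  have hr : 0 < L.length := List.length_pos_iff.mpr hLne
  have hchar := fun i : Fin L.length =>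
    Aux.char_letter hA (L.get i).1 (L.get i).2 (wd.ne_one (L.get i) (List.get_mem L i))
  set bs : Fin L.length → Bool := fun i => (L.get i).1 with hbs
  set q : Fin L.length → A := fun i => Aux.qOf (L.get i).2.1 (L.get i).1 with hqdef
  have halt : ∀ (i : ℕ) (h1 : i + 1 < L.length),
      bs ⟨i, by omega⟩ ≠ bs ⟨i + 1, h1⟩ := by
    have hc := wd.chain_ne
    rw [← hLdef] at hc
    rw [List.isChain_iff_getElem] at hc
    intro i hi
    exact hc i (by omega)
  have hlist : (L.map fun l => (if l.1 then U1grp ι t else U2grp ι t).subtype l.2) =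
      List.ofFn (fun i : Fin L.length =>
        if bs i then elemUnit (0 : Fin 2) 1 (by decide) (q i)
        else elemUnit (1 : Fin 2) 0 (by decide) (q i)) := by
    rw [← List.ofFn_getElem_eq_map L (fun l => (if l.1 then U1grp ι t else U2grp ι t).subtype l.2)]
    show List.ofFn (fun i : Fin L.length =>
      (if (L.get i).1 then U1grp ι t else U2grp ι t).subtype (L.get i).2) = _
    refine congrArg List.ofFn (funext fun i => ?_)
    have h1 : (if (L.get i).1 then U1grp ι t else U2grp ι t).subtype (L.get i).2
        = (L.get i).2.1 := rfl
    rw [h1, (hchar i).2.2.2]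
    rw [Aux.eOf]
  have hφw : (Monoid.CoprodI.lift fun b : Bool =>
      (if b then U1grp ι t else U2grp ι t).subtype) w =
      (List.ofFn (fun i : Fin L.length =>
        if bs i then elemUnit (0 : Fin 2) 1 (by decide) (q i)
        else elemUnit (1 : Fin 2) 0 (by decide) (q i))).prod := by
    conv_lhs => rw [← hprod]
    show (Monoid.CoprodI.lift fun b : Bool => (if b then U1grp ι t else U2grp ι t).subtype)
      (List.prod (L.map fun l => Monoid.CoprodI.of l.snd)) = _
    rw [map_list_prod, List.map_map, ← hlist]
    refine congrArg List.prod (List.map_congr_left fun l _ => ?_)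
    exact Monoid.CoprodI.lift_of _ _
  exact part2 L.length hr bs q (fun i => (hchar i).1) (fun i => (hchar i).2.1)
    (fun i => (hchar i).2.2.1) halt (by rw [← hφw]; exact hw)


end NCLaurent
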